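/- arXiv:2605.12191 — 2 statements merged into one kernel-verified Lean document; each statement's English description precedes it below -/
import Mathlib

section
/- Let (V, E, V_□, V_◇, w) be a finite arena with integer payoffs w : E → ℤ, let λ ∈ ℤ, let W_λ = max_{e ∈ E} |w(e) − λ| (equal to the maximum absolute payoff when λ = 0), and let ℓ' = |V|·(|V|·W_λ + 1). Then for every vertex v ∈ V, Player 1 sure-wins DirBWMP(λ) from v if and only if Player 1 sure-wins DirFWMP(ℓ', λ) from v. -/
open scoped Classical

/-- A finite arena with integer payoffs: a deadlock-free edge relation `E`, a
set `P1` of Player-1 vertices (the probabilistic vertices `V_◇` form the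
complement of `P1`), and an integer payoff `w` on edges. -/
structure ArenaZ (V : Type*) where
  E : V → V → Prop
  P1 : Set V
  w : V → V → ℤ
  nodeadlock : ∀ v : V, ∃ u : V, E v u

/-- A play is an infinite `E`-path. -/
def ArenaZ.IsPlay {V : Type*} (A : ArenaZ V) (π : ℕ → V) : Prop :=
  ∀ n : ℕ, A.E (π n) (π (n + 1))

/-- A strategy for Player 1: given the history (the strict prefix `v_0 … v_{n-1}`
of the current play) and the current vertex `v_n`, if `v_n` belongs to Player 1
then the strategy picks an out-neighbour of `v_n`. -/
structure ArenaZ.Strategy {V : Type*} (A : ArenaZ V) where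
  act : List V → V → V
  legal : ∀ (h : List V) (v : V), v ∈ A.P1 → A.E v (act h v)

/-- `π` is an outcome of strategy `σ` from `v`. -/
def ArenaZ.IsOutcome {V : Type*} (A : ArenaZ V) (σ : A.Strategy) (v : V) (π : ℕ → V) : Prop :=
  π 0 = v ∧ A.IsPlay π ∧
    ∀ n : ℕ, π n ∈ A.P1 → π (n + 1) = σ.act (List.ofFn fun i : Fin n => π i) (π n)

/-- Player 1 sure-wins objective `Φ` from `v`: some strategy has all of its
outcomes from `v` inside `Φ`. -/
def ArenaZ.SureWins {V : Type*} (A : ArenaZ V) (Φ : Set (ℕ → V)) (v : V) : Prop :=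
  ∃ σ : A.Strategy, ∀ π : ℕ → V, A.IsOutcome σ v π → π ∈ Φ

/-- Total payoff of the window of length `d` starting at position `i` of play `π`. -/
def ArenaZ.winSum {V : Type*} (A : ArenaZ V) (π : ℕ → V) (i d : ℕ) : ℤ :=
  ∑ k ∈ Finset.range d, A.w (π (i + k)) (π (i + k + 1))

/-- `π` satisfies `DirFWMP(ℓ, λ)`: every `λ`-window closes within `ℓ` steps. -/
def ArenaZ.DirFWMP {V : Type*} (A : ArenaZ V) (ℓ : ℕ) (lam : ℤ) (π : ℕ → V) : Prop :=
  ∀ i : ℕ, ∃ d : ℕ, 1 ≤ d ∧ d ≤ ℓ ∧ lam * (d : ℤ) ≤ A.winSum π i d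

/-- `π` satisfies `DirBWMP(λ)`: it satisfies `DirFWMP(ℓ, λ)` for some `ℓ ≥ 1`. -/
def ArenaZ.DirBWMP {V : Type*} (A : ArenaZ V) (lam : ℤ) (π : ℕ → V) : Prop :=
  ∃ ℓ : ℕ, 1 ≤ ℓ ∧ A.DirFWMP ℓ lam π

/-- `W_λ = max_{e ∈ E} |w(e) − λ|`, the maximum absolute deviation of an edge
payoff from `λ` (for `λ = 0` this is the maximum absolute payoff `w_max`). -/
noncomputable def ArenaZ.maxDev {V : Type*} [Fintype V] (A : ArenaZ V) (lam : ℤ) : ℕ :=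
  Finset.univ.sup fun e : V × V => if A.E e.1 e.2 then (A.w e.1 e.2 - lam).natAbs else 0

/-!
Let `X` be the set of vertices from which Player 1 sure-wins `DirBWMP(λ)`. Measure an open
window by its deficit `c`, the amount its payoff sum still lacks from `λ` times its length. From
a vertex of `X` Player 1 can force the window opened there to close while staying in `X`:
otherwise the opponent could keep the very first window open forever against a winning strategy.

The time needed to close from a state `(v, c)` is a bounded attractor computation on `V × ℤ`.
Along a play on which it decreases by exactly one per step, the deficit grows by at most `W_λ`
per step and drops strictly between two visits of the same vertex, so it stays in
`[1, |V| W_λ]`; the states are distinct, hence closing from a deficit `≤ W_λ` takes at most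
`|V|² W_λ` steps. Closing each window in this time and then restarting, Player 1 closes every
window within `|V|² W_λ + 1 ≤ ℓ'` steps: a window starting at `i` closes no later than the window
open at `i`, whose deficit is nonnegative.
-/

def IsCausal {α β : Type*} (F : (ℕ → α) → ℕ → β) : Prop :=
  ∀ π π' n, (∀ i ≤ n, π i = π' i) → F π n = F π' n

theorem IsCausal.exists_seq {α : Type*} {F : (ℕ → α) → ℕ → α} (hF : IsCausal F) (a : α) :
    ∃ π : ℕ → α, π 0 = a ∧ ∀ n, π (n + 1) = F π n := by
  -- `P n` agrees with the sequence up to index `n`; the sequence is the diagonal.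
  let P : ℕ → ℕ → α := fun n => n.rec (fun _ => a) fun n p => Function.update p (n + 1) (F p n)
  have hP : ∀ n i, i ≤ n → P n i = P i i := by
    intro n i hi
    induction n with
    | zero => rw [Nat.le_zero.mp hi]
    | succ n ih =>
      rcases hi.lt_or_eq with hi | rfl
      · simp only [P, Function.update_of_ne (Nat.ne_of_lt hi)]
        exact ih (Nat.le_of_lt_succ hi)
      · rfl
  refine ⟨fun n => P n n, rfl, fun n => ?_⟩
  simp only [P, Function.update_self]
  exact hF _ _ _ fun i hi => hP n i hi

theorem List.getD_ofFn_of_le {α : Type*} (π : ℕ → α) {n i : ℕ} (hi : i ≤ n) :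
    (List.ofFn fun j : Fin n => π j).getD i (π n) = π i := by
  rcases hi.lt_or_eq with hi | rfl
  · simp [hi]
  · simp

theorem IsCausal.ofFn {α : Type*} : IsCausal fun (π : ℕ → α) n => List.ofFn fun i : Fin n => π i :=
  fun _ _ _ h => congrArg List.ofFn (funext fun i => h i i.isLt.le)

section RevisitBound

variable {V : Type*} {x : ℕ → V} {d : ℕ → ℤ} {m W : ℕ}

theorem le_mul_card_image_of_revisit_lt (h0 : d 0 ≤ W)
    (hstep : ∀ t, t + 1 < m → d (t + 1) ≤ d t + W)
    (hrev : ∀ s t, s < t → t < m → x s = x t → d t < d s) :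
    ∀ t < m, d t ≤ W * ((Finset.range (t + 1)).image x).card := by
  intro t
  induction t using Nat.strong_induction_on with
  | _ t ih =>
    intro ht
    cases t with
    | zero => simpa using h0
    | succ t =>
      by_cases hseen : x (t + 1) ∈ (Finset.range (t + 1)).image x
      · obtain ⟨s, hs, hsx⟩ := Finset.mem_image.1 hseen
        rw [Finset.mem_range] at hs
        have hcard :
            ((Finset.range (s + 1)).image x).card ≤ ((Finset.range (t + 1 + 1)).image x).card :=
          Finset.card_le_card (Finset.image_subset_image (Finset.range_subset_range.2 (by omega)))
        have hdrop := hrev s (t + 1) hs ht hsx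
        have hs' := ih s (by omega) (by omega)
        have : (W : ℤ) * ((Finset.range (s + 1)).image x).card ≤
            W * ((Finset.range (t + 1 + 1)).image x).card :=
          mul_le_mul_of_nonneg_left (by exact_mod_cast hcard) (by positivity)
        omega
      · rw [Finset.range_add_one, Finset.image_insert, Finset.card_insert_of_notMem hseen]
        have := ih t (by omega) (by omega)
        have := hstep t ht
        push_cast
        linarith

theorem length_le_of_revisit_lt [Fintype V] (h0 : d 0 ≤ W)
    (hstep : ∀ t, t + 1 < m → d (t + 1) ≤ d t + W)
    (hpos : ∀ t < m, 0 < d t) (hrev : ∀ s t, s < t → t < m → x s = x t → d t < d s) :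
    m ≤ Fintype.card V * (Fintype.card V * W) := by
  -- the states `(x t, d t)` are distinct and lie in `V × [1, |V| W]`
  have hmaps : ∀ t ∈ Finset.range m,
      (x t, d t) ∈ (Finset.univ : Finset V) ×ˢ Finset.Icc 1 ((Fintype.card V * W : ℕ) : ℤ) := by
    intro t ht
    rw [Finset.mem_range] at ht
    have hbound := le_mul_card_image_of_revisit_lt h0 hstep hrev t ht
    have : (W : ℤ) * ((Finset.range (t + 1)).image x).card ≤ W * Fintype.card V :=
      mul_le_mul_of_nonneg_left (by exact_mod_cast Finset.card_le_univ _) (by positivity)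
    simp only [Finset.mem_product, Finset.mem_univ, Finset.mem_Icc, true_and]
    push_cast
    constructor <;> linarith [hpos t ht]
  have hinj : Set.InjOn (fun t => (x t, d t)) (Finset.range m) := by
    intro s hs t ht hst
    simp only [Finset.coe_range, Set.mem_Iio, Prod.mk.injEq] at hs ht hst
    by_contra hne
    rcases Nat.lt_or_gt_of_ne hne with hlt | hlt
    · exact (hrev s t hlt ht hst.1).ne hst.2.symm
    · exact (hrev t s hlt hs hst.1.symm).ne hst.2
  have hcard := Finset.card_le_card_of_injOn _ hmaps hinj
  rwa [Finset.card_range, Finset.card_product, Finset.card_univ, Int.card_Icc, add_sub_cancel_right,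
    Int.toNat_natCast] at hcard

end RevisitBound

namespace ArenaZ

variable {V : Type*}

section Strategies

variable {A : ArenaZ V}

def Strategy.ofCausal (F : (ℕ → V) → ℕ → V) (hF : ∀ π n, π n ∈ A.P1 → A.E (π n) (F π n)) :
    A.Strategy where
  -- the history `h` followed by the current vertex `x`, padded with `x`
  act h x := F (fun i => h.getD i x) h.length
  legal h x hx := by
    simpa using hF (fun i => h.getD i x) h.length (by simpa using hx)

theorem IsOutcome.succ_eq_ofCausal {F : (ℕ → V) → ℕ → V} (hF : IsCausal F)
    {hleg : ∀ π n, π n ∈ A.P1 → A.E (π n) (F π n)} {v : V} {π : ℕ → V}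
    (hπ : A.IsOutcome (Strategy.ofCausal F hleg) v π) {n : ℕ} (hn : π n ∈ A.P1) :
    π (n + 1) = F π n := by
  rw [hπ.2.2 n hn]
  simpa [Strategy.ofCausal] using hF _ π n fun i hi => List.getD_ofFn_of_le π hi

theorem exists_outcome (σ : A.Strategy) (v : V) {G : (ℕ → V) → ℕ → V} (hG : IsCausal G)
    (hGE : ∀ π n, π n ∉ A.P1 → A.E (π n) (G π n)) :
    ∃ π, A.IsOutcome σ v π ∧ ∀ n, π n ∉ A.P1 → π (n + 1) = G π n := by
  let H : (ℕ → V) → ℕ → V := fun π n =>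
    if π n ∈ A.P1 then σ.act (List.ofFn fun i : Fin n => π i) (π n) else G π n
  have hH : IsCausal H := fun π π' n h => by
    simp only [H, h n le_rfl, IsCausal.ofFn π π' n h, hG π π' n h]
  obtain ⟨π, h0, hsucc⟩ := hH.exists_seq v
  refine ⟨π, ⟨h0, fun n => ?_, fun n hn => by simp [hsucc, H, hn]⟩,
    fun n hn => by simp [hsucc, H, hn]⟩
  by_cases hn : π n ∈ A.P1
  · simpa [hsucc, H, hn] using σ.legal _ _ hn
  · simpa [hsucc, H, hn] using hGE π n hn

def Strategy.tail (σ : A.Strategy) (x : V) : A.Strategy :=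
  ⟨fun h => σ.act (x :: h), fun h => σ.legal (x :: h)⟩

open Stream' in
theorem IsOutcome.cons {σ : A.Strategy} {x y : V} {π : ℕ → V}
    (hπ : A.IsOutcome (σ.tail x) y π) (hxy : A.E x y) (hy : x ∈ A.P1 → y = σ.act [] x) :
    A.IsOutcome σ x (x :: π) := by
  obtain ⟨h0, hplay, hcons⟩ := hπ
  refine ⟨rfl, fun n => ?_, fun n hn => ?_⟩
  · cases n with
    | zero => show A.E x (π 0); rw [h0]; exact hxy
    | succ n => exact hplay n
  · cases n with
    | zero => show π 0 = σ.act [] x; rw [h0]; exact hy hn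
    | succ n => rw [List.ofFn_succ]; exact hcons n hn

end Strategies

section SuffixClosedObjectives

variable {A : ArenaZ V}

theorem winSum_tail (π : ℕ → V) (i d : ℕ) :
    A.winSum (fun n => π (n + 1)) i d = A.winSum π (i + 1) d := by
  simp only [winSum, Nat.add_right_comm i 1]

theorem winSum_succ (π : ℕ → V) (i d : ℕ) :
    A.winSum π i (d + 1) = A.winSum π i d + A.w (π (i + d)) (π (i + d + 1)) :=
  Finset.sum_range_succ _ _

theorem DirFWMP.mono {ℓ ℓ' : ℕ} {lam : ℤ} {π : ℕ → V} (h : A.DirFWMP ℓ lam π) (hℓ : ℓ ≤ ℓ') :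
    A.DirFWMP ℓ' lam π := fun i =>
  let ⟨d, hd, hdℓ, hsum⟩ := h i
  ⟨d, hd, hdℓ.trans hℓ, hsum⟩

theorem DirBWMP.tail {lam : ℤ} {π : ℕ → V} (h : A.DirBWMP lam π) :
    A.DirBWMP lam fun n => π (n + 1) := by
  obtain ⟨ℓ, hℓ, hπ⟩ := h
  refine ⟨ℓ, hℓ, fun i => ?_⟩
  obtain ⟨d, hd, hdℓ, hsum⟩ := hπ (i + 1)
  exact ⟨d, hd, hdℓ, by rwa [winSum_tail]⟩

variable {Φ : Set (ℕ → V)}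

theorem wins_tail (hΦ : ∀ π ∈ Φ, (fun n => π (n + 1)) ∈ Φ) {σ : A.Strategy} {x y : V}
    (hσ : ∀ π, A.IsOutcome σ x π → π ∈ Φ)
    (hxy : A.E x y) (hy : x ∈ A.P1 → y = σ.act [] x) :
    ∀ π, A.IsOutcome (σ.tail x) y π → π ∈ Φ :=
  fun _ hπ => hΦ _ (hσ _ (hπ.cons hxy hy))

theorem SureWins.of_adj (hΦ : ∀ π ∈ Φ, (fun n => π (n + 1)) ∈ Φ) {u v : V}
    (hu : A.SureWins Φ u) (hP : u ∉ A.P1) (huv : A.E u v) :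
    A.SureWins Φ v :=
  let ⟨σ, hσ⟩ := hu
  ⟨σ.tail u, wins_tail hΦ hσ huv fun h => absurd h hP⟩

theorem sureWins_of_isOutcome (hΦ : ∀ π ∈ Φ, (fun n => π (n + 1)) ∈ Φ) {σ : A.Strategy} {x : V}
    (hσ : ∀ π, A.IsOutcome σ x π → π ∈ Φ)
    {π : ℕ → V} (hπ : A.IsOutcome σ x π) (n : ℕ) : A.SureWins Φ (π n) := by
  -- the strategy `σ`, continued after the prefix `π 0 … π (n - 1)`, wins from `π n`
  suffices ∃ τ : A.Strategy, (∀ h y, τ.act h y = σ.act ((List.ofFn fun i : Fin n => π i) ++ h) y) ∧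
      ∀ π', A.IsOutcome τ (π n) π' → π' ∈ Φ from
    let ⟨τ, _, hτ⟩ := this; ⟨τ, hτ⟩
  induction n with
  | zero => exact ⟨σ, fun _ _ => rfl, hπ.1 ▸ hσ⟩
  | succ n ih =>
    obtain ⟨τ, hact, hτ⟩ := ih
    refine ⟨τ.tail (π n), fun h y => ?_, wins_tail hΦ hτ (hπ.2.1 n) fun hn => ?_⟩
    · rw [Strategy.tail, hact, List.ofFn_succ', List.concat_eq_append, List.append_assoc]
      rfl
    · rw [hπ.2.2 n hn, hact, List.append_nil]

end SuffixClosedObjectives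

section DeficitGame

variable (A : ArenaZ V) (lam : ℤ) (S : Set V)

/-- Controllable predecessor in the deficit game on `V × ℤ`: Player 1 moves inside `S`, the
opponent anywhere, and the edge `(u, v)` lowers the deficit `c` by `w u v - λ`. -/
def CPre (R : V → ℤ → Prop) (u : V) (c : ℤ) : Prop :=
  (u ∈ A.P1 → ∃ v, A.E u v ∧ v ∈ S ∧ R v (c - (A.w u v - lam))) ∧
    (u ∉ A.P1 → ∀ v, A.E u v → R v (c - (A.w u v - lam)))

def Forces : ℕ → V → ℤ → Prop
  | 0, _, c => c ≤ 0
  | k + 1, u, c => c ≤ 0 ∨ A.CPre lam S (Forces k) u c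

variable {A lam S}

theorem CPre.mono {R R' : V → ℤ → Prop} (hR : ∀ v c c', c' ≤ c → R v c → R' v c')
    {u : V} {c c' : ℤ} (hc : c' ≤ c) (h : A.CPre lam S R u c) : A.CPre lam S R' u c' := by
  refine ⟨fun hu => ?_, fun hu v huv => hR _ _ _ (by omega) (h.2 hu v huv)⟩
  obtain ⟨v, huv, hv, hR'⟩ := h.1 hu
  exact ⟨v, huv, hv, hR _ _ _ (by omega) hR'⟩

theorem forces_of_nonpos {k : ℕ} {u : V} {c : ℤ} (hc : c ≤ 0) : A.Forces lam S k u c := by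
  cases k
  exacts [hc, Or.inl hc]

theorem Forces.mono {k k' : ℕ} {u : V} {c c' : ℤ} (hk : k ≤ k') (hc : c' ≤ c)
    (h : A.Forces lam S k u c) : A.Forces lam S k' u c' := by
  induction k generalizing k' u c c' with
  | zero => exact forces_of_nonpos (hc.trans h)
  | succ k ih =>
    obtain ⟨k', rfl⟩ : ∃ j, k' = j + 1 := ⟨k' - 1, by omega⟩
    rcases h with h | h
    · exact forces_of_nonpos (hc.trans h)
    · exact Or.inr (CPre.mono (fun v _ _ hc' hv => ih (k' := k') (u := v) (by omega) hc' hv) hc h)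

theorem Forces.exists_cpre_of_pos {k : ℕ} {u : V} {c : ℤ} (h : A.Forces lam S k u c)
    (hc : 0 < c) : ∃ j, k = j + 1 ∧ A.CPre lam S (A.Forces lam S j) u c := by
  cases k with
  | zero => exact absurd h (not_le.2 hc)
  | succ j => exact ⟨j, rfl, h.resolve_left (not_le.2 hc)⟩

theorem exists_cpre_forces_of_forall_adj [Finite V] {u : V} {c : ℤ} (hu : u ∉ A.P1)
    (h : ∀ v, A.E u v → ∃ k, A.Forces lam S k v (c - (A.w u v - lam))) :
    ∃ k, A.CPre lam S (A.Forces lam S k) u c := by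
  have hev : ∀ v, ∀ᶠ k in Filter.atTop, A.E u v → A.Forces lam S k v (c - (A.w u v - lam)) := by
    intro v
    by_cases huv : A.E u v
    · obtain ⟨k, hk⟩ := h v huv
      exact Filter.eventually_atTop.2 ⟨k, fun k' hk' _ => hk.mono hk' le_rfl⟩
    · exact Filter.Eventually.of_forall fun _ h => absurd h huv
  obtain ⟨k, hk⟩ := (Filter.eventually_all.2 hev).exists
  exact ⟨k, fun h => absurd h hu, fun _ => hk⟩

end DeficitGame

section ClosingTime

variable {A : ArenaZ V} {lam : ℤ} {S : Set V}

theorem abs_sub_le_maxDev [Fintype V] {u v : V} (huv : A.E u v) :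
    |A.w u v - lam| ≤ A.maxDev lam := by
  have := Finset.le_sup (Finset.mem_univ (u, v))
    (f := fun e : V × V => if A.E e.1 e.2 then (A.w e.1 e.2 - lam).natAbs else 0)
  rw [if_pos huv] at this
  rw [Int.abs_eq_natAbs]
  exact_mod_cast this

theorem exists_tight_path {m : ℕ} {u : V} {c : ℤ} (h : A.Forces lam S m u c)
    (hmin : ∀ j < m, ¬ A.Forces lam S j u c) :
    ∃ (x : ℕ → V) (d : ℕ → ℤ), x 0 = u ∧ d 0 = c ∧
      (∀ t < m, A.Forces lam S (m - t) (x t) (d t) ∧ ∀ j < m - t, ¬ A.Forces lam S j (x t) (d t)) ∧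
      ∀ t, t + 1 < m → A.E (x t) (x (t + 1)) ∧ d (t + 1) = d t - (A.w (x t) (x (t + 1)) - lam) := by
  induction m generalizing u c with
  | zero => exact ⟨fun _ => u, fun _ => c, rfl, rfl, by simp, by simp⟩
  | succ m ih =>
    have hc : 0 < c := not_le.1 fun hc => hmin 0 m.succ_pos (forces_of_nonpos hc)
    have hcpre : A.CPre lam S (A.Forces lam S m) u c := h.resolve_left (not_le.2 hc)
    obtain ⟨v, huv, hv, hvmin⟩ : ∃ v, A.E u v ∧ A.Forces lam S m v (c - (A.w u v - lam)) ∧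
        ∀ j < m, ¬ A.Forces lam S j v (c - (A.w u v - lam)) := by
      by_cases hu : u ∈ A.P1
      · obtain ⟨v, huv, hvS, hv⟩ := hcpre.1 hu
        refine ⟨v, huv, hv, fun j hj hvj => hmin (j + 1) (by omega) (Or.inr ⟨fun _ => ?_, ?_⟩)⟩
        exacts [⟨v, huv, hvS, hvj⟩, fun h => absurd hu h]
      · by_contra! hfast
        obtain ⟨v, huv⟩ := A.nodeadlock u
        obtain ⟨j, hj, -⟩ := hfast v huv (hcpre.2 hu v huv)
        refine hmin m m.lt_succ_self ?_
        obtain ⟨m, rfl⟩ : ∃ i, m = i + 1 := ⟨m - 1, by omega⟩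
        refine Or.inr ⟨fun h => absurd h hu, fun _ v huv => ?_⟩
        obtain ⟨j, hj, hvj⟩ := hfast v huv (hcpre.2 hu v huv)
        exact hvj.mono (by omega) le_rfl
    obtain ⟨x, d, hx0, hd0, htight, hpath⟩ := ih hv hvmin
    refine ⟨fun t => Nat.casesOn t u x, fun t => Nat.casesOn t c d, rfl, rfl, fun t ht => ?_,
      fun t ht => ?_⟩
    · cases t with
      | zero => exact ⟨h, hmin⟩
      | succ t => simpa using htight t (by omega)
    · cases t with
      | zero => exact ⟨show A.E u (x 0) from hx0 ▸ huv, by simp [hx0, hd0]⟩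
      | succ t => exact hpath t (by omega)

theorem Forces.mono_card_mul [Fintype V] {k : ℕ} {u : V} {c : ℤ} (h : A.Forces lam S k u c)
    (hc : c ≤ A.maxDev lam) :
    A.Forces lam S (Fintype.card V * (Fintype.card V * A.maxDev lam)) u c := by
  have hex : ∃ k, A.Forces lam S k u c := ⟨k, h⟩
  obtain ⟨x, d, -, hd0, htight, hpath⟩ := exists_tight_path (Nat.find_spec hex)
    fun j hj => Nat.find_min hex hj
  refine (Nat.find_spec hex).mono (length_le_of_revisit_lt (x := x) (hd0 ▸ hc) (fun t ht => ?_)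
    (fun t ht => ?_) (fun s t hst ht hx => ?_)) le_rfl
  · rw [(hpath t ht).2]
    linarith [neg_abs_le (A.w (x t) (x (t + 1)) - lam),
      abs_sub_le_maxDev (lam := lam) (hpath t ht).1]
  · exact not_le.1 fun hd => (htight t ht).2 0 (by omega) (forces_of_nonpos hd)
  · -- a revisit without a strict drop would let the earlier state close faster
    refine not_le.1 fun hd => (htight s (by omega)).2 (Nat.find hex - t) (by omega) ?_
    exact hx ▸ (htight t ht).1.mono le_rfl hd

theorem CPre.forces_mono_card_mul [Fintype V] {k : ℕ} {u : V}
    (h : A.CPre lam S (A.Forces lam S k) u 0) :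
    A.CPre lam S (A.Forces lam S (Fintype.card V * (Fintype.card V * A.maxDev lam))) u 0 := by
  have hle : ∀ v, A.E u v → 0 - (A.w u v - lam) ≤ A.maxDev lam := fun v huv => by
    linarith [neg_abs_le (A.w u v - lam), abs_sub_le_maxDev (lam := lam) huv]
  refine ⟨fun hu => ?_, fun hu v huv => (h.2 hu v huv).mono_card_mul (hle v huv)⟩
  obtain ⟨v, huv, hv, hk⟩ := h.1 hu
  exact ⟨v, huv, hv, hk.mono_card_mul (hle v huv)⟩

end ClosingTime

section Closability

variable (A : ArenaZ V) (lam : ℤ) (S : Set V)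

noncomputable def spoiler (u : V) (c : ℤ) : V :=
  if h : ∃ v, A.E u v ∧ ∀ k, ¬ A.Forces lam S k v (c - (A.w u v - lam)) then h.choose
  else (A.nodeadlock u).choose

def bwmpWinning : Set V := {u | A.SureWins {π | A.DirBWMP lam π} u}

variable {A lam S}

theorem mem_bwmpWinning_of_adj {u v : V} (hu : u ∈ A.bwmpWinning lam) (hP : u ∉ A.P1)
    (huv : A.E u v) : v ∈ A.bwmpWinning lam :=
  SureWins.of_adj (fun π (h : A.DirBWMP lam π) => h.tail) hu hP huv

theorem adj_spoiler (u : V) (c : ℤ) : A.E u (A.spoiler lam S u c) := by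
  by_cases h : ∃ v, A.E u v ∧ ∀ k, ¬ A.Forces lam S k v (c - (A.w u v - lam))
  · simpa only [spoiler, dif_pos h] using h.choose_spec.1
  · simpa only [spoiler, dif_neg h] using (A.nodeadlock u).choose_spec

theorem not_forces_of_not_cpre [Finite V] {u v : V} {c : ℤ}
    (hu : ∀ k, ¬ A.CPre lam S (A.Forces lam S k) u c) (huv : A.E u v) (hvS : u ∈ A.P1 → v ∈ S)
    (hv : u ∉ A.P1 → v = A.spoiler lam S u c) (k : ℕ) :
    ¬ A.Forces lam S k v (c - (A.w u v - lam)) := by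
  intro hk
  by_cases hP : u ∈ A.P1
  · exact hu k ⟨fun _ => ⟨v, huv, hvS hP, hk⟩, fun h => absurd hP h⟩
  · by_cases hbad : ∃ v, A.E u v ∧ ∀ k, ¬ A.Forces lam S k v (c - (A.w u v - lam))
    · have hv' : v = hbad.choose := by rw [hv hP]; exact dif_pos hbad
      exact hbad.choose_spec.2 k (hv' ▸ hk)
    · push Not at hbad
      obtain ⟨k, hk⟩ := exists_cpre_forces_of_forall_adj hP hbad
      exact hu k hk

theorem exists_cpre_of_mem_bwmpWinning [Finite V] {u : V} (hu : u ∈ A.bwmpWinning lam) :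
    ∃ k, A.CPre lam (A.bwmpWinning lam) (A.Forces lam (A.bwmpWinning lam) k) u 0 := by
  set X := A.bwmpWinning lam
  obtain ⟨σ, hσ⟩ := hu
  by_contra! hstuck
  let deficit : (ℕ → V) → ℕ → ℤ := fun π n => lam * n - A.winSum π 0 n
  have hcausal : IsCausal fun π n => A.spoiler lam X (π n) (deficit π n) := fun π π' n h => by
    have : A.winSum π 0 n = A.winSum π' 0 n := Finset.sum_congr rfl fun k hk => by
      rw [Finset.mem_range] at hk
      rw [h _ (by omega), h _ (by omega)]
    simp only [deficit, this, h n le_rfl]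
  obtain ⟨π, hπ, hadv⟩ := A.exists_outcome σ u hcausal fun π n _ => adj_spoiler _ _
  have hdef : ∀ n, deficit π (n + 1) = deficit π n - (A.w (π n) (π (n + 1)) - lam) := by
    intro n
    simp only [deficit, winSum_succ, zero_add]
    push_cast
    ring
  have hnext : ∀ n, (∀ k, ¬ A.CPre lam X (A.Forces lam X k) (π n) (deficit π n)) →
      ∀ k, ¬ A.Forces lam X k (π (n + 1)) (deficit π (n + 1)) := fun n hn k => by
    rw [hdef]
    exact not_forces_of_not_cpre hn (hπ.2.1 n)
      (fun _ => sureWins_of_isOutcome (fun π (h : A.DirBWMP lam π) => h.tail) hσ hπ (n + 1))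
      (hadv n) k
  have hstuck_all : ∀ n k, ¬ A.CPre lam X (A.Forces lam X k) (π n) (deficit π n) := by
    intro n
    induction n with
    | zero => simpa [hπ.1, deficit, winSum] using hstuck
    | succ n ih => exact fun k hk => hnext n ih (k + 1) (Or.inr hk)
  obtain ⟨ℓ, -, hℓ⟩ := hσ π hπ
  obtain ⟨d, hd, -, hsum⟩ := hℓ 0
  obtain ⟨n, rfl⟩ : ∃ n, d = n + 1 := ⟨d - 1, by omega⟩
  exact hnext n (hstuck_all n) 0 (show deficit π (n + 1) ≤ 0 by simp only [deficit]; linarith)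

end Closability

section WindowStrategy

variable (A : ArenaZ V) (lam : ℤ) (S : Set V) (N : ℕ)

/-- Memory of the window strategy after `π 0 … π n`: the deficit of the currently open window
(`0` once it has closed, which restarts the count) and the steps left to close it. -/
def windowState (π : ℕ → V) : ℕ → ℤ × ℕ
  | 0 => (0, N)
  | n + 1 =>
    if (windowState π n).1 - (A.w (π n) (π (n + 1)) - lam) ≤ 0 then (0, N)
    else ((windowState π n).1 - (A.w (π n) (π (n + 1)) - lam), (windowState π n).2 - 1)

noncomputable def windowMove (u : V) (p : ℤ × ℕ) : V :=
  if h : ∃ v, A.E u v ∧ v ∈ S ∧ A.Forces lam S p.2 v (p.1 - (A.w u v - lam)) then h.choose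
  else (A.nodeadlock u).choose

theorem windowState_fst_nonneg (π : ℕ → V) (n : ℕ) : 0 ≤ (A.windowState lam N π n).1 := by
  cases n with
  | zero => exact le_rfl
  | succ n =>
    simp only [windowState]
    split_ifs
    · exact le_rfl
    · omega

theorem windowState_snd_le (π : ℕ → V) (n : ℕ) : (A.windowState lam N π n).2 ≤ N := by
  induction n with
  | zero => exact le_rfl
  | succ n ih =>
    simp only [windowState]
    split_ifs
    · exact le_rfl
    · omega

variable {A lam S N}

theorem adj_windowMove (u : V) (p : ℤ × ℕ) : A.E u (A.windowMove lam S u p) := by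
  by_cases h : ∃ v, A.E u v ∧ v ∈ S ∧ A.Forces lam S p.2 v (p.1 - (A.w u v - lam))
  · simpa only [windowMove, dif_pos h] using h.choose_spec.1
  · simpa only [windowMove, dif_neg h] using (A.nodeadlock u).choose_spec

theorem isCausal_windowState : IsCausal (A.windowState lam N) := by
  intro π π' n h
  induction n with
  | zero => rfl
  | succ n ih =>
    simp only [windowState, ih fun i hi => h i (by omega), h n (by omega), h (n + 1) le_rfl]

theorem dirFWMP_of_windowState {π : ℕ → V}
    (hb : ∀ n, 0 < (A.windowState lam N π n).1 - (A.w (π n) (π (n + 1)) - lam) →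
      0 < (A.windowState lam N π n).2) :
    A.DirFWMP (N + 1) lam π := by
  intro i
  set ws := A.windowState lam N π
  have key : ∀ j, (∃ d, 1 ≤ d ∧ d ≤ j ∧ lam * d ≤ A.winSum π i d) ∨
      ((ws (i + j)).1 = (ws i).1 - (A.winSum π i j - lam * j) ∧ (ws (i + j)).2 + j = (ws i).2) := by
    intro j
    induction j with
    | zero => simp [winSum]
    | succ j ih =>
      rcases ih with ⟨d, hd, hdj, hsum⟩ | ⟨hc, hbud⟩
      · exact Or.inl ⟨d, hd, by omega, hsum⟩
      · have hsucc := winSum_succ (A := A) π i j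
        have hnn : 0 ≤ (ws i).1 := A.windowState_fst_nonneg lam N π i
        by_cases hclose : (ws (i + j)).1 - (A.w (π (i + j)) (π (i + j + 1)) - lam) ≤ 0
        · refine Or.inl ⟨j + 1, by omega, le_rfl, ?_⟩
          push_cast
          linarith
        · have := hb (i + j) (not_le.1 hclose)
          refine Or.inr ?_
          have hnext : ws (i + j + 1) = ((ws (i + j)).1 - (A.w (π (i + j)) (π (i + j + 1)) - lam),
              (ws (i + j)).2 - 1) := if_neg hclose
          rw [← add_assoc, hnext]
          constructor
          · push_cast
            linarith
          · omega
  rcases key (N + 1) with ⟨d, hd, hdN, hsum⟩ | ⟨-, hbud⟩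
  · exact ⟨d, hd, hdN, hsum⟩
  · have : (ws i).2 ≤ N := A.windowState_snd_le lam N π i
    omega

variable (A lam S N) in
noncomputable def windowStrategy : A.Strategy :=
  Strategy.ofCausal (fun π n => A.windowMove lam S (π n) (A.windowState lam N π n))
    fun _ _ _ => adj_windowMove _ _

theorem windowStrategy_step (hadj : ∀ u ∈ S, u ∉ A.P1 → ∀ v, A.E u v → v ∈ S) {u : V} {π : ℕ → V}
    (hπ : A.IsOutcome (A.windowStrategy lam S N) u π) {n : ℕ} (hn : π n ∈ S)
    (hcpre : A.CPre lam S (A.Forces lam S (A.windowState lam N π n).2) (π n)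
      (A.windowState lam N π n).1) :
    π (n + 1) ∈ S ∧ A.Forces lam S (A.windowState lam N π n).2 (π (n + 1))
      ((A.windowState lam N π n).1 - (A.w (π n) (π (n + 1)) - lam)) := by
  by_cases hP : π n ∈ A.P1
  · have hex := hcpre.1 hP
    have hcausal : IsCausal fun π n => A.windowMove lam S (π n) (A.windowState lam N π n) :=
      fun π π' n h => by simp only [h n le_rfl, isCausal_windowState π π' n h]
    rw [hπ.succ_eq_ofCausal hcausal hP, windowMove, dif_pos hex]
    exact hex.choose_spec.2
  · exact ⟨hadj _ hn hP _ (hπ.2.1 n), hcpre.2 hP _ (hπ.2.1 n)⟩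

theorem sureWins_dirFWMP_of_forall_cpre (hadj : ∀ u ∈ S, u ∉ A.P1 → ∀ v, A.E u v → v ∈ S)
    (hS : ∀ u ∈ S, A.CPre lam S (A.Forces lam S N) u 0) {u : V} (hu : u ∈ S) :
    A.SureWins {π | A.DirFWMP (N + 1) lam π} u := by
  refine ⟨A.windowStrategy lam S N, fun π hπ => ?_⟩
  have hinv : ∀ n, π n ∈ S ∧
      A.CPre lam S (A.Forces lam S (A.windowState lam N π n).2) (π n)
        (A.windowState lam N π n).1 := by
    intro n
    induction n with
    | zero => exact ⟨hπ.1 ▸ hu, hπ.1 ▸ hS u hu⟩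
    | succ n ih =>
      obtain ⟨hnext, hforces⟩ := windowStrategy_step hadj hπ ih.1 ih.2
      refine ⟨hnext, ?_⟩
      simp only [windowState]
      split_ifs with hc
      · exact hS _ hnext
      · obtain ⟨j, hj, hcpre⟩ := hforces.exists_cpre_of_pos (not_le.1 hc)
        simpa [hj] using hcpre
  refine dirFWMP_of_windowState fun n hc => ?_
  obtain ⟨j, hj, -⟩ := (windowStrategy_step hadj hπ (hinv n).1 (hinv n).2).2.exists_cpre_of_pos hc
  omega

end WindowStrategy

end ArenaZ

theorem sure_dirbwmp_iff_sure_dirfwmp_general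
    {V : Type*} [Fintype V] (A : ArenaZ V) (lam : ℤ) (v : V) :
    A.SureWins {π : ℕ → V | A.DirBWMP lam π} v ↔
    A.SureWins
      {π : ℕ → V | A.DirFWMP (Fintype.card V * (Fintype.card V * A.maxDev lam + 1)) lam π} v := by
  set N := Fintype.card V * (Fintype.card V * A.maxDev lam)
  have hℓ : N + 1 ≤ Fintype.card V * (Fintype.card V * A.maxDev lam + 1) := by
    have := Fintype.card_pos_iff.2 ⟨v⟩
    simp only [N, Nat.mul_add, Nat.mul_one]
    omega
  constructor
  · intro hv
    obtain ⟨σ, hσ⟩ := ArenaZ.sureWins_dirFWMP_of_forall_cpre (N := N)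
      (fun _ hu hP _ huv => ArenaZ.mem_bwmpWinning_of_adj hu hP huv)
      (fun _ hu => (ArenaZ.exists_cpre_of_mem_bwmpWinning hu).choose_spec.forces_mono_card_mul) hv
    exact ⟨σ, fun π hπ => (hσ π hπ).mono hℓ⟩
  · rintro ⟨σ, hσ⟩
    exact ⟨σ, fun π hπ => ⟨_, by omega, hσ π hπ⟩⟩

/-- With `W_λ = max_{e ∈ E} |w(e) − λ|` and `ℓ' = |V|·(|V|·W_λ + 1)`, for every
vertex `v`, Player 1 sure-wins `DirBWMP(λ)` from `v` if and only if Player 1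
sure-wins `DirFWMP(ℓ', λ)` from `v`. -/
theorem sure_dirbwmp_iff_sure_dirfwmp
    {V : Type*} [Fintype V] [Nonempty V] (A : ArenaZ V) (lam : ℤ) (v : V) :
    A.SureWins {π : ℕ → V | A.DirBWMP lam π} v ↔
    A.SureWins
      {π : ℕ → V | A.DirFWMP (Fintype.card V * (Fintype.card V * A.maxDev lam + 1)) lam π} v :=
  sure_dirbwmp_iff_sure_dirfwmp_general A lam v
end

section
/- Let w : ℕ → ℝ, λ ∈ ℝ, and j ∈ ℕ. If no λ-window is open at position j — i.e., for every i < j there exists k with i < k ≤ j and S(i,k) ≥ λ·(k−i) — then the total payoff of the prefix of length j satisfies S(0,j) ≥ λ·j. -/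
open scoped Classical

/-- `infixSum w i j = S(i,j) = Σ_{t=i}^{j-1} w t`, the total payoff of the
infix `(i, j)` of the payoff sequence `w`. -/
def infixSum (w : ℕ → ℝ) (i j : ℕ) : ℝ :=
  ∑ t ∈ Finset.Ico i j, w t

/-! Cut `[i, j)` at the witness `k` of the hypothesis: the piece `[i, k)` has average payoff at
least `λ`, and `[k, j)` does by induction on `j - i`, since both the payoff and `λ · length`
add up over consecutive infixes. -/

theorem infixSum_self (w : ℕ → ℝ) (i : ℕ) : infixSum w i i = 0 := by
  simp [infixSum]

theorem infixSum_add_infixSum (w : ℕ → ℝ) {i k j : ℕ} (hik : i ≤ k) (hkj : k ≤ j) :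
    infixSum w i k + infixSum w k j = infixSum w i j :=
  Finset.sum_Ico_consecutive w hik hkj

theorem mul_sub_le_infixSum_of_forall_exists (w : ℕ → ℝ) (lam : ℝ) {j : ℕ}
    (h : ∀ i : ℕ, i < j → ∃ k : ℕ, i < k ∧ k ≤ j ∧
      lam * ((k - i : ℕ) : ℝ) ≤ infixSum w i k) :
    ∀ i ≤ j, lam * ((j - i : ℕ) : ℝ) ≤ infixSum w i j := by
  intro i hij
  induction hm : j - i using Nat.strong_induction_on generalizing i with
  | _ m ih =>
    subst hm
    rcases hij.eq_or_lt with rfl | hlt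
    · simp [infixSum_self]
    obtain ⟨k, hik, hkj, hik_sum⟩ := h i hlt
    have hkj_sum := ih (j - k) (by omega) k hkj rfl
    have hlen : ((j - i : ℕ) : ℝ) = ((k - i : ℕ) : ℝ) + ((j - k : ℕ) : ℝ) := by
      rw [← Nat.cast_add]
      congr 1
      omega
    calc lam * ((j - i : ℕ) : ℝ)
        = lam * ((k - i : ℕ) : ℝ) + lam * ((j - k : ℕ) : ℝ) := by rw [hlen, mul_add]
      _ ≤ infixSum w i k + infixSum w k j := add_le_add hik_sum hkj_sum
      _ = infixSum w i j := infixSum_add_infixSum w hik.le hkj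

/-- If no `λ`-window is open at position `j`, then the total payoff of the
prefix of length `j` satisfies `S(0,j) ≥ λ·j`. -/
theorem no_open_window_prefix_sum (w : ℕ → ℝ) (lam : ℝ) (j : ℕ)
    (h : ∀ i : ℕ, i < j → ∃ k : ℕ, i < k ∧ k ≤ j ∧
      lam * ((k - i : ℕ) : ℝ) ≤ infixSum w i k) :
    lam * (j : ℝ) ≤ infixSum w 0 j := by
  simpa using mul_sub_le_infixSum_of_forall_exists w lam h 0 (Nat.zero_le j)
end
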